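/- There exists a constant C > 0 such that for all integers q ≥ 2 and k ≥ 1 with q² ≤ k, | ∑_{c=0}^{q−1} S^{q}_{k}(c,c) − ∑_{d=1}^{q−1} S^{q−1}_{k}(d+1,d) − ∑_{m=k³}^{(k+1)³} μ(m)² | ≤ C·q². -/

import Mathlib

/-- The Liouville function `λ(n) = (−1)^{Ω(n)}`. -/
def liouville (n : ℕ) : ℤ := (-1) ^ (ArithmeticFunction.cardFactors n)

/-- `L_{k,q} := ⌊((k+1)³ − k³)/q⌋ − 1`. -/
def Lkq (k q : ℕ) : ℕ := ((k + 1) ^ 3 - k ^ 3) / q - 1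

/-- `S^q_k(r,c) := ∑_{b=r}^{q−1+r} ∑_{j=0}^{L_{k,q}} λ(qj+c+k³)·μ(qj+b+k³)`. -/
def Sqk (q k r c : ℕ) : ℤ :=
  ∑ b ∈ Finset.Icc r (q - 1 + r), ∑ j ∈ Finset.range (Lkq k q + 1),
    liouville (q * j + c + k ^ 3) * ArithmeticFunction.moebius (q * j + b + k ^ 3)

/-!
Write `N = (k+1)³ - k³`. Unfolding, `∑_c S^q_k(c,c)` is the sum of `λ(n) μ(n+h)` over all shifts
`0 ≤ h < q` and all `n` in `[k³, k³ + q⌊N/q⌋)`, while `∑_d S^{q-1}_k(d+1,d)` is the same sum over the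
shifts `1 ≤ h < q` and `n` in `[k³ + 1, k³ + (q-1)⌊N/(q-1)⌋]`. For each shift `h ≥ 1` the two ranges of `n`
differ in `O(q)` points, and the shift `h = 0` contributes `λ(n) μ(n) = μ(n)²`, again over all but `O(q)`
points of `[k³, (k+1)³]`. Every summand has absolute value at most `1`, so the total error is `O(q²)`.
-/

open Finset
open ArithmeticFunction hiding liouville
open scoped ArithmeticFunction.Moebius

lemma sum_range_mul_eq_sum_sum_range (f : ℕ → ℤ) (p m : ℕ) :
    ∑ i ∈ range (p * m), f i = ∑ j ∈ range m, ∑ c ∈ range p, f (p * j + c) := by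
  induction m with
  | zero => simp
  | succ m ih => rw [sum_range_succ, ← ih, Nat.mul_succ, sum_range_add]

lemma sum_Icc_sub_one_add_eq_sum_range (f : ℕ → ℤ) {p : ℕ} (hp : 0 < p) (a : ℕ) :
    ∑ i ∈ Icc a (p - 1 + a), f i = ∑ i ∈ range p, f (a + i) := by
  rw [← Ico_add_one_right_eq_Icc, sum_Ico_eq_sum_range, show p - 1 + a + 1 - a = p by omega]

lemma abs_sum_le_card_of_abs_le_one {s : Finset ℕ} {f : ℕ → ℤ} (hf : ∀ i, |f i| ≤ 1) :
    |∑ i ∈ s, f i| ≤ #s :=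
  (abs_sum_le_sum_abs f s).trans <| by simpa using sum_le_card_nsmul s _ 1 fun i _ => hf i

lemma abs_sum_range_sub_sum_range_le {f : ℕ → ℤ} (hf : ∀ i, |f i| ≤ 1) {a b r : ℕ}
    (hab : a ≤ b + r) (hba : b ≤ a + r) :
    |∑ i ∈ range a, f i - ∑ i ∈ range b, f i| ≤ r := by
  wlog h : a ≤ b generalizing a b
  · rw [abs_sub_comm]; exact this hba hab (by omega)
  rw [abs_sub_comm, ← sum_Ico_eq_sub _ h]
  refine (abs_sum_le_card_of_abs_le_one hf).trans ?_
  simp only [Nat.card_Ico]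
  omega

lemma abs_liouville (n : ℕ) : |liouville n| = 1 := by
  simp [liouville, abs_pow]

def liouvilleMoebius (h n : ℕ) : ℤ := liouville n * μ (n + h)

lemma abs_liouvilleMoebius_le_one (h n : ℕ) : |liouvilleMoebius h n| ≤ 1 := by
  rw [liouvilleMoebius, abs_mul, abs_liouville, one_mul]
  exact abs_moebius_le_one

lemma liouvilleMoebius_zero (n : ℕ) : liouvilleMoebius 0 n = μ n ^ 2 := by
  rw [liouvilleMoebius, add_zero]
  by_cases h : Squarefree n
  · rw [moebius_apply_of_squarefree h, liouville]; ring
  · rw [moebius_eq_zero_of_not_squarefree h]; ring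

lemma Sqk_add_eq {q : ℕ} (hq : 0 < q) (k c s : ℕ) :
    Sqk q k (c + s) c = ∑ e ∈ range q, ∑ j ∈ range (Lkq k q + 1),
      liouvilleMoebius (s + e) (q * j + c + k ^ 3) := by
  rw [Sqk, sum_Icc_sub_one_add_eq_sum_range _ hq]
  refine sum_congr rfl fun e _ => sum_congr rfl fun j _ => ?_
  rw [liouvilleMoebius]
  congr 2
  ring

lemma sum_Sqk_diag {q : ℕ} (hq : 0 < q) (k : ℕ) :
    ∑ c ∈ range q, Sqk q k c c = ∑ e ∈ range q,
      ∑ i ∈ range (q * (Lkq k q + 1)), liouvilleMoebius e (i + k ^ 3) := by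
  have hdiag (c : ℕ) := Sqk_add_eq hq k c 0
  simp only [add_zero, zero_add] at hdiag
  simp_rw [hdiag, sum_range_mul_eq_sum_sum_range]
  rw [sum_comm]
  exact sum_congr rfl fun e _ => sum_comm

lemma sum_Sqk_offdiag {p : ℕ} (hp : 0 < p) (k : ℕ) :
    ∑ d ∈ Icc 1 p, Sqk p k (d + 1) d = ∑ e ∈ range p,
      ∑ i ∈ range (p * (Lkq k p + 1)), liouvilleMoebius (e + 1) (i + 1 + k ^ 3) := by
  simp_rw [Sqk_add_eq hp, sum_range_mul_eq_sum_sum_range]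
  rw [show Icc 1 p = Icc 1 (p - 1 + 1) by rw [Nat.sub_add_cancel hp],
    sum_Icc_sub_one_add_eq_sum_range _ hp, sum_comm]
  refine sum_congr rfl fun e _ => ?_
  rw [sum_comm]
  refine sum_congr rfl fun j _ => sum_congr rfl fun c _ => ?_
  rw [add_comm 1 e]
  congr 1
  ring

lemma Lkq_add_one_eq {k q : ℕ} (hq : 0 < q) (hqN : q ≤ (k + 1) ^ 3 - k ^ 3) :
    Lkq k q + 1 = ((k + 1) ^ 3 - k ^ 3) / q := by
  have hpos := Nat.div_pos hqN hq
  rw [Lkq]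
  omega

lemma mul_Lkq_add_one_le_and_lt {k q : ℕ} (hq : 0 < q) (hqN : q ≤ (k + 1) ^ 3 - k ^ 3) :
    q * (Lkq k q + 1) ≤ (k + 1) ^ 3 - k ^ 3 ∧ (k + 1) ^ 3 - k ^ 3 < q * (Lkq k q + 1) + q := by
  rw [Lkq_add_one_eq hq hqN, ← Nat.mul_succ]
  exact ⟨Nat.mul_div_le _ _, Nat.lt_mul_div_succ _ hq⟩

lemma sum_Icc_cube_moebius_sq (k : ℕ) :
    ∑ m ∈ Icc (k ^ 3) ((k + 1) ^ 3), μ m ^ 2 =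
      ∑ i ∈ range ((k + 1) ^ 3 - k ^ 3 + 1), liouvilleMoebius 0 (i + k ^ 3) := by
  have hcube : k ^ 3 ≤ (k + 1) ^ 3 := Nat.pow_le_pow_left k.le_succ 3
  rw [← Ico_add_one_right_eq_Icc, sum_Ico_eq_sum_range,
    show (k + 1) ^ 3 + 1 - k ^ 3 = (k + 1) ^ 3 - k ^ 3 + 1 by omega]
  simp_rw [liouvilleMoebius_zero, add_comm]

lemma abs_sum_Sqk_sub_sum_Sqk_sub_sum_moebius_sq_le {q k : ℕ} (hq : 2 ≤ q)
    (hqN : q ≤ (k + 1) ^ 3 - k ^ 3) :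
    |∑ c ∈ range q, Sqk q k c c - ∑ d ∈ Icc 1 (q - 1), Sqk (q - 1) k (d + 1) d -
      ∑ m ∈ Icc (k ^ 3) ((k + 1) ^ 3), μ m ^ 2| ≤ q ^ 2 + q := by
  have hP := mul_Lkq_add_one_le_and_lt (by omega) hqN
  have hP' := mul_Lkq_add_one_le_and_lt (k := k) (q := q - 1) (by omega) (by omega)
  rw [sum_Sqk_diag (by omega), sum_Sqk_offdiag (by omega), sum_Icc_cube_moebius_sq]
  set N := (k + 1) ^ 3 - k ^ 3
  set P := q * (Lkq k q + 1)
  set P' := (q - 1) * (Lkq k (q - 1) + 1)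
  set F : ℕ → ℕ → ℤ := fun e M => ∑ i ∈ range M, liouvilleMoebius e (i + k ^ 3)
  have hF {e a b r : ℕ} (hab : a ≤ b + r) (hba : b ≤ a + r) : |F e a - F e b| ≤ r :=
    abs_sum_range_sub_sum_range_le (fun i => abs_liouvilleMoebius_le_one _ _) hab hba
  have hdiag : ∑ e ∈ range q, F e P = F 0 P + ∑ e ∈ range (q - 1), F (e + 1) P := by
    rw [← Nat.sub_add_cancel (by omega : 1 ≤ q), sum_range_succ', add_comm,
      Nat.sub_add_cancel (by omega : 1 ≤ q)]
  have hshift (e : ℕ) : ∑ i ∈ range P', liouvilleMoebius (e + 1) (i + 1 + k ^ 3) =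
      F (e + 1) (P' + 1) - liouvilleMoebius (e + 1) (k ^ 3) := by
    simp only [F, sum_range_succ', zero_add, add_sub_cancel_right]
  have hshift_le (e : ℕ) :
      |F (e + 1) P - (F (e + 1) (P' + 1) - liouvilleMoebius (e + 1) (k ^ 3))| ≤ q + 1 := by
    rw [sub_sub_eq_add_sub, add_sub_right_comm]
    refine (abs_add_le _ _).trans (add_le_add (hF (r := q) (by omega) (by omega)) ?_)
    exact abs_liouvilleMoebius_le_one _ _
  change |∑ e ∈ range q, F e P - ∑ e ∈ range (q - 1), ∑ i ∈ range P',
    liouvilleMoebius (e + 1) (i + 1 + k ^ 3) - F 0 (N + 1)| ≤ _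
  simp_rw [hdiag, hshift]
  rw [show ∀ x y z w : ℤ, x + y - z - w = (x - w) + (y - z) by intros; ring, ← sum_sub_distrib]
  calc _ ≤ (q : ℤ) + ∑ e ∈ range (q - 1), ((q : ℤ) + 1) :=
        (abs_add_le _ _).trans <| add_le_add (hF (by omega) (by omega)) <|
          (abs_sum_le_sum_abs _ _).trans (sum_le_sum fun e _ => hshift_le e)
    _ ≤ q ^ 2 + q := by
        rw [sum_const, card_range, nsmul_eq_mul, Nat.cast_sub (by omega : 1 ≤ q)]
        push_cast
        nlinarith

/-- the difference of the two diagonal correlation sums equals the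
count of squarefree numbers in `[k³,(k+1)³]`, up to an error `O(q²)`. -/
theorem stmt_13 :
    ∃ C : ℝ, 0 < C ∧ ∀ q k : ℕ, 2 ≤ q → 1 ≤ k → q ^ 2 ≤ k →
      |((∑ c ∈ Finset.range q, Sqk q k c c : ℤ) : ℝ) -
          ((∑ d ∈ Finset.Icc 1 (q - 1), Sqk (q - 1) k (d + 1) d : ℤ) : ℝ) -
          ∑ m ∈ Finset.Icc (k ^ 3) ((k + 1) ^ 3),
            (ArithmeticFunction.moebius m : ℝ) ^ 2| ≤ C * q ^ 2 := by
  refine ⟨2, two_pos, fun q k hq _ hqk => ?_⟩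
  have hqN : q ≤ (k + 1) ^ 3 - k ^ 3 := by
    have hk : k ^ 3 + k ≤ (k + 1) ^ 3 := by nlinarith
    have hq2 : q ≤ q ^ 2 := Nat.le_self_pow two_ne_zero q
    omega
  have key := abs_sum_Sqk_sub_sum_Sqk_sub_sum_moebius_sq_le hq hqN
  have hq_sq : (q : ℤ) ^ 2 + q ≤ 2 * q ^ 2 := by nlinarith
  exact_mod_cast key.trans hq_sq
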